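/- arXiv:2011.00314 — 6 statements merged into one kernel-verified Lean document; each statement's English description precedes it below -/
import Mathlib

section
/- For a Möbius transformation m(z) = (az+b)/(cz+d) with coefficients in K normalized so that max(|a|,|b|,|c|,|d|) = 1 and ad - bc ≠ 0, the action on (P^1(K), chordal metric) is quasi-isometric: for all z, w ∈ P^1(K), |ad-bc|·[z,w] ≤ [m(z), m(w)] ≤ |ad-bc|^{-1}·[z,w]. -/
/-!
Under `m` the numerator `p₁q₂ - p₂q₁` of the chordal metric is multiplied by `Δ = ad - bc`.
By the ultrametric inequality and `|a|, |b|, |c|, |d| ≤ 1`, the matrix of `m` does not increase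
the sup norm of a lift; neither does its adjugate, whose product with it is `Δ`, so `m` shrinks
the sup norm by a factor of at least `|Δ|`. Hence the denominator of the chordal metric changes
by a factor between `|Δ|²` and `1`, which gives both bounds.
-/

/-- The chordal metric on homogeneous representatives. -/
noncomputable def chord {K : Type*} [Field K] (v : AbsoluteValue K ℝ)
    (p q : K × K) : ℝ :=
  v (p.1 * q.2 - p.2 * q.1) / (max (v p.1) (v p.2) * max (v q.1) (v q.2))

section SupAbv

variable {R : Type*} [CommRing R] (v : AbsoluteValue R ℝ)

def supAbv (p : R × R) : ℝ := max (v p.1) (v p.2)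

def moebiusLift (a b c d : R) (p : R × R) : R × R := (a * p.1 + b * p.2, c * p.1 + d * p.2)

variable {v}

lemma supAbv_pos {p : R × R} (hp : p ≠ 0) : 0 < supAbv v p := by
  by_cases h₁ : p.1 = 0
  · have h₂ : p.2 ≠ 0 := fun h₂ => hp (Prod.ext h₁ h₂)
    exact lt_max_of_lt_right (v.pos h₂)
  · exact lt_max_of_lt_left (v.pos h₁)

lemma supAbv_smul (r : R) (p : R × R) : supAbv v (r • p) = v r * supAbv v p := by
  simp only [supAbv, Prod.smul_fst, Prod.smul_snd, smul_eq_mul, map_mul]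
  exact (mul_max_of_nonneg _ _ (v.nonneg r)).symm

lemma abv_add_mul_le_supAbv (hv : IsNonarchimedean (v : R → ℝ)) {a b : R}
    (ha : v a ≤ 1) (hb : v b ≤ 1) (p : R × R) : v (a * p.1 + b * p.2) ≤ supAbv v p := by
  refine (hv _ _).trans (max_le_max ?_ ?_) <;> rw [map_mul]
  · exact mul_le_of_le_one_left (v.nonneg _) ha
  · exact mul_le_of_le_one_left (v.nonneg _) hb

lemma supAbv_moebiusLift_le (hv : IsNonarchimedean (v : R → ℝ)) {a b c d : R}
    (ha : v a ≤ 1) (hb : v b ≤ 1) (hc : v c ≤ 1) (hd : v d ≤ 1) (p : R × R) :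
    supAbv v (moebiusLift a b c d p) ≤ supAbv v p :=
  max_le (abv_add_mul_le_supAbv hv ha hb p) (abv_add_mul_le_supAbv hv hc hd p)

lemma moebiusLift_adjugate_moebiusLift (a b c d : R) (p : R × R) :
    moebiusLift d (-b) (-c) a (moebiusLift a b c d p) = (a * d - b * c) • p := by
  ext <;> simp only [moebiusLift, Prod.smul_fst, Prod.smul_snd, smul_eq_mul] <;> ring

lemma abv_det_mul_supAbv_le (hv : IsNonarchimedean (v : R → ℝ)) {a b c d : R}
    (ha : v a ≤ 1) (hb : v b ≤ 1) (hc : v c ≤ 1) (hd : v d ≤ 1) (p : R × R) :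
    v (a * d - b * c) * supAbv v p ≤ supAbv v (moebiusLift a b c d p) := by
  rw [← supAbv_smul, ← moebiusLift_adjugate_moebiusLift]
  exact supAbv_moebiusLift_le hv hd (by rwa [map_neg_eq_map]) (by rwa [map_neg_eq_map]) ha _

end SupAbv

lemma chord_eq_div_supAbv {K : Type*} [Field K] (v : AbsoluteValue K ℝ) (p q : K × K) :
    chord v p q = v (p.1 * q.2 - p.2 * q.1) / (supAbv v p * supAbv v q) :=
  rfl

lemma chord_moebiusLift {K : Type*} [Field K] (v : AbsoluteValue K ℝ) (a b c d : K)
    (p q : K × K) :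
    chord v (moebiusLift a b c d p) (moebiusLift a b c d q) =
      v (a * d - b * c) * v (p.1 * q.2 - p.2 * q.1) /
        (supAbv v (moebiusLift a b c d p) * supAbv v (moebiusLift a b c d q)) := by
  rw [chord_eq_div_supAbv, ← map_mul]
  congr 2
  simp only [moebiusLift]
  ring

/-- A Möbius transformation `m(z) = (az+b)/(cz+d)` with
`max (|a|,|b|,|c|,|d|) = 1` and `ad - bc ≠ 0`, acting on `P¹(K)` by
`[z₀:z₁] ↦ [a z₀ + b z₁ : c z₀ + d z₁]`, is quasi-isometric for the chordal
metric: `|ad-bc|·[z,w] ≤ [m z, m w] ≤ |ad-bc|⁻¹·[z,w]`. -/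
theorem moebius_quasi_isometry {K : Type*} [Field K] (v : AbsoluteValue K ℝ)
    (hv : IsNonarchimedean (v : K → ℝ)) (a b c d : K)
    (hnorm : max (max (v a) (v b)) (max (v c) (v d)) = 1)
    (hdet : a * d - b * c ≠ 0) (p q : K × K) (hp : p ≠ 0) (hq : q ≠ 0) :
    v (a * d - b * c) * chord v p q ≤
        chord v (a * p.1 + b * p.2, c * p.1 + d * p.2)
          (a * q.1 + b * q.2, c * q.1 + d * q.2) ∧
      chord v (a * p.1 + b * p.2, c * p.1 + d * p.2)
          (a * q.1 + b * q.2, c * q.1 + d * q.2) ≤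
        (v (a * d - b * c))⁻¹ * chord v p q := by
  obtain ⟨⟨ha, hb⟩, hc, hd⟩ : (v a ≤ 1 ∧ v b ≤ 1) ∧ v c ≤ 1 ∧ v d ≤ 1 := by
    simpa only [max_le_iff] using hnorm.le
  change _ ≤ chord v (moebiusLift a b c d p) (moebiusLift a b c d q) ∧
    chord v (moebiusLift a b c d p) (moebiusLift a b c d q) ≤ _
  rw [chord_moebiusLift, chord_eq_div_supAbv]
  have hδ : 0 < v (a * d - b * c) := v.pos hdet
  have hp_pos := supAbv_pos (v := v) hp
  have hq_pos := supAbv_pos (v := v) hq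
  have hmp_le := supAbv_moebiusLift_le hv ha hb hc hd p
  have hmq_le := supAbv_moebiusLift_le hv ha hb hc hd q
  have hmp_ge := abv_det_mul_supAbv_le hv ha hb hc hd p
  have hmq_ge := abv_det_mul_supAbv_le hv ha hb hc hd q
  have hmp_pos := (mul_pos hδ hp_pos).trans_le hmp_ge
  have hmq_pos := (mul_pos hδ hq_pos).trans_le hmq_ge
  constructor
  · rw [← mul_div_assoc]
    gcongr
  · calc _ ≤ v (a * d - b * c) * v (p.1 * q.2 - p.2 * q.1) /
          (v (a * d - b * c) * supAbv v p * (v (a * d - b * c) * supAbv v q)) := by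
          gcongr
      _ = _ := by field_simp
end

section
/- The transfinite diameter of the closed disk B(a,r) in an algebraically closed non-archimedean field K with |K*| dense in ℝ>0 equals r. -/
open Filter

/-- The `n`-th diameter `d_n(E)`. -/
noncomputable def dSeq {K : Type*} [NormedField K] (E : Set K) (n : ℕ) : ℝ :=
  sSup {x : ℝ | ∃ z : Fin n → K, (∀ i, z i ∈ E) ∧
    x = (∏ i, ∏ j ∈ Finset.univ.erase i, ‖z i - z j‖) ^
        ((1 : ℝ) / ((n : ℝ) * ((n : ℝ) - 1)))}

/-!
The diameters of the closed disk are all equal to `r`. In an ultrametric field any two points of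
`B(a, r)` are at distance at most `r`, so every product in `dSeq` is at most `r ^ (n (n - 1))`.
Conversely, if `‖(m : K)‖ = 1` then distinct `m`-th roots of unity are at distance exactly `1`
(the identity `m = ∑_{k < m} (1 - θ ^ k)` forces `‖1 - θ‖ ≥ 1`), and such `m ≥ n` exist since
`‖2‖ = 1` or `‖3‖ = 1`. Scaling `n` of them by `y` with `‖y‖` just below `r`, which algebraic
closedness provides, gives configurations in `B(a, r)` whose products are `‖y‖ ^ (n (n - 1))`.
-/

open Finset

namespace IsAlgClosed

variable {K : Type*} [NontriviallyNormedField K] [IsAlgClosed K]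

theorem exists_one_lt_norm_lt {t : ℝ} (ht : 1 < t) : ∃ c : K, 1 < ‖c‖ ∧ ‖c‖ < t := by
  obtain ⟨b, hb⟩ := NormedField.exists_one_lt_norm K
  obtain ⟨k, hk⟩ := pow_unbounded_of_one_lt ‖b‖ ht
  have hk0 : k ≠ 0 := by
    rintro rfl
    exact hk.not_gt (by simpa using hb)
  obtain ⟨c, rfl⟩ := exists_pow_nat_eq b (Nat.pos_of_ne_zero hk0)
  rw [norm_pow] at hb hk
  exact ⟨c, (one_lt_pow_iff_of_nonneg (norm_nonneg c) hk0).1 hb,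
    lt_of_pow_lt_pow_left₀ k (by positivity) hk⟩

theorem exists_lt_norm_lt {s r : ℝ} (hs : 0 ≤ s) (hsr : s < r) : ∃ y : K, s < ‖y‖ ∧ ‖y‖ < r := by
  set s' := max s (r / 2)
  have hs' : 0 < s' := lt_max_of_lt_right (by linarith)
  have hs'r : s' < r := max_lt hsr (by linarith)
  obtain ⟨c, hc1, hcr⟩ := exists_one_lt_norm_lt (K := K) ((one_lt_div hs').2 hs'r)
  have hc0 : 0 < ‖c‖ := zero_lt_one.trans hc1
  obtain ⟨k, hk_lt, hk_le⟩ := exists_mem_Ioc_zpow (hs'.trans hs'r) hc1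
  refine ⟨c ^ k, ?_, by rwa [norm_zpow]⟩
  rw [norm_zpow]
  have hs'c : s' * ‖c‖ < ‖c‖ ^ k * ‖c‖ := by
    calc s' * ‖c‖ < r := (lt_div_iff₀' hs').1 hcr
      _ ≤ ‖c‖ ^ (k + 1) := hk_le
      _ = ‖c‖ ^ k * ‖c‖ := zpow_add_one₀ hc0.ne' k
  exact (le_max_left s (r / 2)).trans_lt (lt_of_mul_lt_mul_right hs'c hc0.le)

end IsAlgClosed

namespace IsUltrametricDist

variable {K : Type*} [NormedField K] [IsUltrametricDist K]

theorem exists_le_norm_natCast_eq_one (n : ℕ) : ∃ m : ℕ, n ≤ m ∧ ‖(m : K)‖ = 1 := by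
  have h23 : ‖(2 : K)‖ = 1 ∨ ‖(3 : K)‖ = 1 := by
    by_contra! h
    have h2 : ‖(2 : K)‖ < 1 := lt_of_le_of_ne (by simpa using norm_natCast_le_one K 2) h.1
    have h3 : ‖(3 : K)‖ < 1 := lt_of_le_of_ne (by simpa using norm_natCast_le_one K 3) h.2
    have h1 : ‖(3 : K) + -2‖ ≤ max ‖(3 : K)‖ ‖(-2 : K)‖ := norm_add_le_max _ _
    rw [norm_neg, show (3 : K) + -2 = 1 by norm_num, norm_one] at h1
    exact h1.not_gt (max_lt h3 h2)
  rcases h23 with h | h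
  · exact ⟨2 ^ n, n.lt_two_pow_self.le, by simp [h]⟩
  · exact ⟨3 ^ n, n.lt_two_pow_self.le.trans (Nat.pow_le_pow_left (by norm_num) n), by simp [h]⟩

theorem norm_one_sub_eq_one_of_pow_eq_one {m : ℕ} (hm : ‖(m : K)‖ = 1) {θ : K}
    (hθm : θ ^ m = 1) (hθ : θ ≠ 1) : ‖1 - θ‖ = 1 := by
  have hm0 : m ≠ 0 := by
    rintro rfl
    simp at hm
  have hθ_norm : ‖θ‖ = 1 :=
    (isOfFinOrder_iff_pow_eq_one.2 ⟨m, Nat.pos_of_ne_zero hm0, hθm⟩).norm_eq_one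
  refine le_antisymm (by simpa [hθ_norm, sub_eq_add_neg] using norm_add_le_max 1 (-θ)) ?_
  have hm_sum : (m : K) = ∑ k ∈ range m, (1 - θ ^ k) := by
    simp [sum_sub_distrib, geom_sum_eq hθ, hθm]
  -- each `1 - θ ^ k = (1 - θ) * ∑_{j < k} θ ^ j` with the geometric sum of norm at most `1`
  have h_term : ∀ k, ‖1 - θ ^ k‖ ≤ ‖1 - θ‖ := fun k => by
    have hgeom : ‖∑ j ∈ range k, θ ^ j‖ ≤ 1 :=
      norm_sum_le_of_forall_le_of_nonneg zero_le_one fun j _ => by simp [hθ_norm]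
    rw [← mul_neg_geom_sum, norm_mul]
    exact mul_le_of_le_one_right (norm_nonneg _) hgeom
  rw [← hm, hm_sum]
  exact norm_sum_le_of_forall_le_of_nonneg (norm_nonneg _) fun k _ => h_term k

theorem _root_.IsPrimitiveRoot.norm_pow_sub_pow_eq_one {m : ℕ} (hm : ‖(m : K)‖ = 1) {ζ : K}
    (hζ : IsPrimitiveRoot ζ m) {k l : ℕ} (hkl : k < l) (hl : l < m) : ‖ζ ^ k - ζ ^ l‖ = 1 := by
  have hζ_norm : ‖ζ‖ = 1 := (hζ.isOfFinOrder (by omega)).norm_eq_one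
  have hsplit : ζ ^ k - ζ ^ l = ζ ^ k * (1 - ζ ^ (l - k)) := by
    rw [mul_sub, mul_one, ← pow_add, Nat.add_sub_cancel' hkl.le]
  rw [hsplit, norm_mul, norm_pow, hζ_norm, one_pow, one_mul]
  refine norm_one_sub_eq_one_of_pow_eq_one hm ?_ (hζ.pow_ne_one_of_pos_of_lt (by omega) (by omega))
  rw [← pow_mul, mul_comm, pow_mul, hζ.pow_eq_one, one_pow]

theorem exists_pairwise_norm_sub_eq_one [IsAlgClosed K] (n : ℕ) :
    ∃ w : Fin n → K, (∀ i, ‖w i‖ = 1) ∧ ∀ i j, i ≠ j → ‖w i - w j‖ = 1 := by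
  obtain ⟨m, hnm, hm⟩ := exists_le_norm_natCast_eq_one (K := K) n
  have : NeZero (m : K) := ⟨fun h => by simp [h] at hm⟩
  obtain ⟨ζ, hζ⟩ := HasEnoughRootsOfUnity.exists_primitiveRoot K m
  have hm0 : m ≠ 0 := NeZero.of_neZero_natCast K |>.out
  refine ⟨fun i => ζ ^ (i : ℕ), fun i => ?_, fun i j hij => ?_⟩
  · simp [(hζ.isOfFinOrder hm0).norm_eq_one]
  · rcases Fin.lt_or_lt_of_ne hij with h | h
    · exact hζ.norm_pow_sub_pow_eq_one hm h (j.isLt.trans_le hnm)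
    · rw [norm_sub_rev]
      exact hζ.norm_pow_sub_pow_eq_one hm h (i.isLt.trans_le hnm)

end IsUltrametricDist

section Diameter

variable {K : Type*} [NormedField K] {n : ℕ}

theorem pow_rpow_one_div_mul_sub_one {t : ℝ} (ht : 0 ≤ t) (hn : 2 ≤ n) :
    (t ^ (n * (n - 1))) ^ ((1 : ℝ) / ((n : ℝ) * ((n : ℝ) - 1))) = t := by
  have hcast : ((n * (n - 1) : ℕ) : ℝ) = (n : ℝ) * ((n : ℝ) - 1) := by
    push_cast [Nat.cast_sub (by omega : 1 ≤ n)]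
    ring
  rw [one_div, ← hcast]
  exact Real.pow_rpow_inv_natCast ht (Nat.mul_ne_zero (by omega) (by omega))

theorem prod_prod_erase_const (t : ℝ) :
    ∏ i : Fin n, ∏ _j ∈ univ.erase i, t = t ^ (n * (n - 1)) := by
  simp [prod_const, card_erase_of_mem, ← pow_mul, mul_comm]

theorem prod_norm_sub_rpow_le {t : ℝ} (ht : 0 ≤ t) (hn : 2 ≤ n) {z : Fin n → K}
    (hz : ∀ i j, i ≠ j → ‖z i - z j‖ ≤ t) :
    (∏ i, ∏ j ∈ univ.erase i, ‖z i - z j‖) ^ ((1 : ℝ) / ((n : ℝ) * ((n : ℝ) - 1))) ≤ t := by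
  have hn1 : (1 : ℝ) ≤ n := by exact_mod_cast one_le_two.trans hn
  have hprod : ∏ i, ∏ j ∈ univ.erase i, ‖z i - z j‖ ≤ t ^ (n * (n - 1)) := by
    rw [← prod_prod_erase_const]
    refine prod_le_prod (fun i _ => prod_nonneg fun j _ => norm_nonneg _) fun i _ => ?_
    exact prod_le_prod (fun j _ => norm_nonneg _) fun j hj => hz i j (ne_of_mem_erase hj).symm
  calc _ ≤ (t ^ (n * (n - 1))) ^ ((1 : ℝ) / ((n : ℝ) * ((n : ℝ) - 1))) :=
        Real.rpow_le_rpow (prod_nonneg fun i _ => prod_nonneg fun j _ => norm_nonneg _) hprod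
          (div_nonneg zero_le_one (mul_nonneg (by linarith) (by linarith)))
    _ = t := pow_rpow_one_div_mul_sub_one ht hn

theorem prod_norm_sub_rpow_eq {t : ℝ} (ht : 0 ≤ t) (hn : 2 ≤ n) {z : Fin n → K}
    (hz : ∀ i j, i ≠ j → ‖z i - z j‖ = t) :
    (∏ i, ∏ j ∈ univ.erase i, ‖z i - z j‖) ^ ((1 : ℝ) / ((n : ℝ) * ((n : ℝ) - 1))) = t := by
  have hprod : ∏ i, ∏ j ∈ univ.erase i, ‖z i - z j‖ = t ^ (n * (n - 1)) := by
    rw [← prod_prod_erase_const]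
    exact prod_congr rfl fun i _ => prod_congr rfl fun j hj => hz i j (ne_of_mem_erase hj).symm
  rw [hprod, pow_rpow_one_div_mul_sub_one ht hn]

end Diameter

theorem dSeq_closedDisk {K : Type*} [NontriviallyNormedField K] [IsAlgClosed K]
    [IsUltrametricDist K] (a : K) {r : ℝ} (hr : 0 < r) {n : ℕ} (hn : 2 ≤ n) :
    dSeq {z : K | ‖z - a‖ ≤ r} n = r := by
  refine csSup_eq_of_forall_le_of_forall_lt_exists_gt
    ⟨_, fun _ => a, by simp [hr.le], rfl⟩ ?_ fun s hs => ?_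
  · rintro _ ⟨z, hz, rfl⟩
    refine prod_norm_sub_rpow_le hr.le hn fun i j _ => ?_
    calc ‖z i - z j‖ ≤ max ‖z i - a‖ ‖z j - a‖ := by
          simpa only [dist_eq_norm, norm_sub_rev a] using dist_triangle_max (z i) a (z j)
      _ ≤ r := max_le (hz i) (hz j)
  · obtain ⟨y, hsy, hyr⟩ := IsAlgClosed.exists_lt_norm_lt (K := K) (le_max_right s 0)
      (max_lt hs hr)
    obtain ⟨w, hw_norm, hw_sub⟩ :=
      IsUltrametricDist.exists_pairwise_norm_sub_eq_one (K := K) n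
    refine ⟨‖y‖, ⟨fun i => a + y * w i, fun i => by simpa [hw_norm] using hyr.le, ?_⟩,
      (le_max_left s 0).trans_lt hsy⟩
    refine (prod_norm_sub_rpow_eq (norm_nonneg y) hn fun i j hij => ?_).symm
    rw [add_sub_add_left_eq_sub, ← mul_sub, norm_mul, hw_sub i j hij, mul_one]

theorem transDiam_closedDisk_general {K : Type*} [NontriviallyNormedField K]
    [IsAlgClosed K] (hna : IsNonarchimedean (norm : K → ℝ))
    (a : K) (r : ℝ) (hr : 0 < r) :
    Tendsto (fun n => dSeq {z : K | ‖z - a‖ ≤ r} n) atTop (nhds r) := by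
  have : IsUltrametricDist K := IsUltrametricDist.isUltrametricDist_of_isNonarchimedean_norm hna
  refine tendsto_const_nhds.congr' ?_
  filter_upwards [eventually_ge_atTop 2] with n hn
  exact (dSeq_closedDisk a hr hn).symm

/-- In an algebraically closed field complete with respect to a non-trivial
non-archimedean absolute value, the transfinite diameter of the closed disk
`B(a,r)`, `r > 0`, equals `r`. -/
theorem transDiam_closedDisk {K : Type*} [NontriviallyNormedField K]
    [IsAlgClosed K] [CompleteSpace K] (hna : IsNonarchimedean (norm : K → ℝ))
    (a : K) (r : ℝ) (hr : 0 < r) :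
    Tendsto (fun n => dSeq {z : K | ‖z - a‖ ≤ r} n) atTop (nhds r) :=
  transDiam_closedDisk_general hna a r hr
end

section
/- Suppose a compact set E ⊆ K has the lower capacity density property with constant c ∈ (0,1): for every z ∈ E and every r ∈ (0, diam E), the transfinite diameter of E ∩ B(z,r) is at least c·r. Then every annulus A(a; r, r') = {w : r < |w - a| < r'} that separates E (i.e., A ∩ E = ∅, E meets B(a,r), and E meets {w : |w-a| ≥ r'}) has modulus log(r'/r) ≤ log(1/c). -/
/-!
Let `z ∈ E ∩ B(a, r)` and `z' ∈ E` with `|z' - a| ≥ r'`. By the ultrametric inequality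
`|z' - z| ≥ r'`, so `diam E ≥ r'`, and for every `ρ < r'` the ball `B(z, ρ)` lies inside
`B(a, r')`; as the annulus misses `E`, `E ∩ B(z, ρ) ⊆ B(a, r) = B(z, r)`. Any set whose points
are at mutual distance `≤ r` has capacity `≤ r`, so the density property gives `c ρ ≤ r` for all
`ρ < r'`, hence `r' / r ≤ 1 / c`.
-/

open Filter

/-- The transfinite diameter (capacity) `d(E) = lim_n d_n(E)`, realized as a
limsup (the sequence `d_n(E)` converges). -/
noncomputable def transDiam {K : Type*} [NormedField K] (E : Set K) : ℝ :=
  Filter.limsup (fun n => dSeq E n) atTop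

open Metric

section Capacity

variable {K : Type*} [NormedField K]

lemma dSeq_nonneg (E : Set K) (n : ℕ) : 0 ≤ dSeq E n := by
  apply Real.sSup_nonneg
  rintro x ⟨z, -, rfl⟩
  exact Real.rpow_nonneg (Finset.prod_nonneg fun i _ =>
    Finset.prod_nonneg fun j _ => norm_nonneg _) _

lemma dSeq_le_of_forall_norm_sub_le {S : Set K} {r : ℝ} (hr : 0 ≤ r)
    (hS : ∀ x ∈ S, ∀ y ∈ S, ‖x - y‖ ≤ r) {n : ℕ} (hn : 2 ≤ n) : dSeq S n ≤ r := by
  apply Real.sSup_le _ hr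
  rintro x ⟨w, hw, rfl⟩
  have hcast : ((n * (n - 1) : ℕ) : ℝ) = (n : ℝ) * ((n : ℝ) - 1) := by
    push_cast [Nat.cast_sub (by omega : 1 ≤ n)]
    ring
  have hpos : (0 : ℝ) < (n : ℝ) * ((n : ℝ) - 1) := by
    rw [← hcast]
    exact_mod_cast Nat.mul_pos (by omega) (by omega)
  have hprod : ∏ i, ∏ j ∈ Finset.univ.erase i, ‖w i - w j‖ ≤ r ^ (n * (n - 1)) :=
    calc ∏ i, ∏ j ∈ Finset.univ.erase i, ‖w i - w j‖
        ≤ ∏ i : Fin n, ∏ _j ∈ Finset.univ.erase i, r :=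
          Finset.prod_le_prod (fun i _ => Finset.prod_nonneg fun j _ => norm_nonneg _)
            fun i _ => Finset.prod_le_prod (fun j _ => norm_nonneg _)
              fun j _ => hS _ (hw i) _ (hw j)
      _ = r ^ (n * (n - 1)) := by
          simp [Finset.prod_const, Finset.card_erase_of_mem, ← pow_mul, mul_comm]
  calc (∏ i, ∏ j ∈ Finset.univ.erase i, ‖w i - w j‖) ^ ((1 : ℝ) / ((n : ℝ) * ((n : ℝ) - 1)))
      ≤ (r ^ (n * (n - 1))) ^ ((1 : ℝ) / ((n : ℝ) * ((n : ℝ) - 1))) :=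
        Real.rpow_le_rpow (Finset.prod_nonneg fun i _ => Finset.prod_nonneg fun j _ =>
          norm_nonneg _) hprod (by positivity)
    _ = r := by
        rw [← Real.rpow_natCast, ← Real.rpow_mul hr, hcast, mul_one_div, div_self hpos.ne',
          Real.rpow_one]

lemma transDiam_le_of_forall_norm_sub_le {S : Set K} {r : ℝ} (hr : 0 ≤ r)
    (hS : ∀ x ∈ S, ∀ y ∈ S, ‖x - y‖ ≤ r) : transDiam S ≤ r :=
  limsup_le_of_le (isCoboundedUnder_le_of_le atTop (dSeq_nonneg S))
    (eventually_atTop.2 ⟨2, fun _ hn => dSeq_le_of_forall_norm_sub_le hr hS hn⟩)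

lemma transDiam_le_of_subset_closedBall [IsUltrametricDist K] {S : Set K} {z : K} {r : ℝ}
    (hr : 0 ≤ r) (hS : S ⊆ closedBall z r) : transDiam S ≤ r :=
  transDiam_le_of_forall_norm_sub_le hr fun x hx y hy => by
    rw [← dist_eq_norm]
    exact (IsUltrametricDist.dist_triangle_max x z y).trans
      (max_le (hS hx) (dist_comm y z ▸ hS hy))

end Capacity

section Ultrametric

variable {X : Type*} [PseudoMetricSpace X] [IsUltrametricDist X]

lemma le_dist_of_mem_closedBall_of_le_dist {a z z' : X} {r r' : ℝ} (hrr' : r < r')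
    (hz : z ∈ closedBall a r) (hz' : r' ≤ dist z' a) : r' ≤ dist z' z := by
  by_contra! h
  have := IsUltrametricDist.dist_triangle_max z' z a
  exact (hz'.trans this).not_gt (max_lt h ((mem_closedBall.1 hz).trans_lt hrr'))

lemma inter_closedBall_subset_closedBall_of_inter_ball_subset {E : Set X} {a z : X}
    {r r' ρ : ℝ} (hsep : E ∩ ball a r' ⊆ closedBall a r) (hrr' : r < r')
    (hz : z ∈ closedBall a r) (hρ : ρ < r') : E ∩ closedBall z ρ ⊆ closedBall z r := by
  rw [← IsUltrametricDist.closedBall_eq_of_mem hz]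
  have hball : ball a r' = ball z r' :=
    IsUltrametricDist.ball_eq_of_mem (closedBall_subset_ball hrr' hz)
  refine Set.Subset.trans (Set.inter_subset_inter_right E ?_) hsep
  rw [hball]
  exact closedBall_subset_ball hρ

end Ultrametric

theorem lcd_implies_bounded_moduli_general {K : Type*} [NontriviallyNormedField K]
    (hna : IsNonarchimedean (norm : K → ℝ))
    (E : Set K) (hE : IsCompact E) (c : ℝ) (hc0 : 0 < c)
    (hdens : ∀ z ∈ E, ∀ r : ℝ, 0 < r → r < Metric.diam E →
      c * r ≤ transDiam (E ∩ {w : K | ‖w - z‖ ≤ r})) :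
    ∀ (a : K) (r r' : ℝ), 0 < r → r < r' →
      (∀ w : K, r < ‖w - a‖ → ‖w - a‖ < r' → w ∉ E) →
      (∃ z ∈ E, ‖z - a‖ ≤ r) → (∃ z ∈ E, r' ≤ ‖z - a‖) →
      Real.log (r' / r) ≤ Real.log (1 / c) := by
  rintro a r r' hr hrr' hann ⟨z, hzE, hza⟩ ⟨z', hz'E, hz'a⟩
  have := IsUltrametricDist.isUltrametricDist_of_isNonarchimedean_norm hna
  have hz : z ∈ closedBall a r := by rwa [mem_closedBall, dist_eq_norm]
  have hsep : E ∩ ball a r' ⊆ closedBall a r := fun w ⟨hwE, hw⟩ => by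
    rw [mem_ball, dist_eq_norm] at hw
    rw [mem_closedBall, dist_eq_norm]
    exact not_lt.1 fun h => hann w h hw hwE
  have hdiam : r' ≤ diam E :=
    (le_dist_of_mem_closedBall_of_le_dist hrr' hz (by rwa [dist_eq_norm])).trans
      (dist_le_diam_of_mem hE.isBounded hz'E hzE)
  have hcap : ∀ ρ, 0 < ρ → ρ < r' → c * ρ ≤ r := fun ρ hρ0 hρ => by
    have hball : {w : K | ‖w - z‖ ≤ ρ} = closedBall z ρ := by ext; simp [dist_eq_norm]
    refine (hdens z hzE ρ hρ0 (hρ.trans_le hdiam)).trans ?_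
    rw [hball]
    exact transDiam_le_of_subset_closedBall hr.le
      (inter_closedBall_subset_closedBall_of_inter_ball_subset hsep hrr' hz hρ)
  have hr'c : r' ≤ r / c := le_of_forall_lt_imp_le_of_dense fun ρ hρ => by
    rcases le_or_gt ρ 0 with hρ0 | hρ0
    · exact hρ0.trans (by positivity)
    · exact (le_div_iff₀' hc0).2 (hcap ρ hρ0 hρ)
  refine Real.log_le_log (div_pos (hr.trans hrr') hr) ?_
  rw [div_le_div_iff₀ hr hc0]
  linarith [(le_div_iff₀' hc0).1 hr'c]

/-- If a compact set `E` has the lower capacity density property with constant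
`c ∈ (0,1)` — i.e. `d(E ∩ B(z,r)) ≥ c·r` for all `z ∈ E`, `0 < r < diam E` —
then every annulus `A(a; r, r')` separating `E` has modulus
`log (r'/r) ≤ log (1/c)`. -/
theorem lcd_implies_bounded_moduli {K : Type*} [NontriviallyNormedField K]
    [IsAlgClosed K] [CompleteSpace K] (hna : IsNonarchimedean (norm : K → ℝ))
    (E : Set K) (hE : IsCompact E) (c : ℝ) (hc0 : 0 < c) (hc1 : c < 1)
    (hdens : ∀ z ∈ E, ∀ r : ℝ, 0 < r → r < Metric.diam E →
      c * r ≤ transDiam (E ∩ {w : K | ‖w - z‖ ≤ r})) :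
    ∀ (a : K) (r r' : ℝ), 0 < r → r < r' →
      (∀ w : K, r < ‖w - a‖ → ‖w - a‖ < r' → w ∉ E) →
      (∃ z ∈ E, ‖z - a‖ ≤ r) → (∃ z ∈ E, r' ≤ ‖z - a‖) →
      Real.log (r' / r) ≤ Real.log (1 / c) :=
  lcd_implies_bounded_moduli_general hna E hE c hc0 hdens
end

section
/- Suppose E ⊆ K is compact and there is a constant M ≥ 0 such that every annulus A(a; r, r') separating E has modulus log(r'/r) ≤ M. Fix s ∈ (0, e^{-M}). Then for every z0 ∈ E and r ∈ (0, diam E), the transfinite diameter of E ∩ B(z0, r) is at least s^2 · r. In particular E has the lower capacity density property with constant c = s^2, for any s < e^{-M}. -/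
/-!
Bounded moduli of separating annuli make `E` uniformly perfect: for any `t < e^{-M}`, around
every `z ∈ E` and at every scale `ρ` at which `E` still has points at distance `≥ ρ` from `z`,
there is a point of `E` at distance in `[tρ, ρ)`, since otherwise `{tρ < |w - z| < ρ}` would be
a separating annulus of modulus `log (1/t) > M`. Iterating this at the scales `ρ, ερ, ε²ρ, …`
builds a binary tree of `2^k` points of `E ∩ B(z₀, r)` in which, by the ultrametric inequality,
two points that split at depth `i` are at distance `≥ tεⁱr`. Counting pairs gives
`∏_{x ≠ y} |x - y| ≥ (εtr)^{N(N-1)} ε^N` for `N = 2^k`, hence `d_N ≥ εtr · ε^{1/(N-1)} → εtr`,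
and `ε = s²/t` gives `s²r`.
-/

open Filter

open Metric Topology
open scoped Finset

section Ultrametric

variable {X : Type*} [PseudoMetricSpace X] [IsUltrametricDist X]

lemma le_dist_of_mem_ball_of_le_dist {u v z w : X} {c : ℝ} (hu : u ∈ ball z c)
    (hv : v ∈ ball w c) (hzw : c ≤ dist z w) : c ≤ dist u v := by
  by_contra! huv
  refine hzw.not_gt ?_
  calc dist z w ≤ max (dist z u) (dist u w) := dist_triangle_max z u w
    _ < c := max_lt (by rwa [dist_comm]) ((dist_triangle_max u v w).trans_lt (max_lt huv hv))

lemma exists_le_dist_of_lt_diam {E : Set X} {r : ℝ} (hr : 0 ≤ r) (hrE : r < diam E) (z : X) :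
    ∃ z' ∈ E, r ≤ dist z' z := by
  by_contra! h
  refine hrE.not_ge (diam_le_of_forall_dist_le hr fun x hx y hy => ?_)
  exact (dist_triangle_max x z y).trans
    (max_le (h x hx).le (by rw [dist_comm]; exact (h y hy).le))

end Ultrametric

section PairDistProd

variable {X : Type*} [PseudoMetricSpace X]

lemma pow_card_mul_card_le_prod_prod_dist {S T : Finset X} {c : ℝ} (hc : 0 ≤ c)
    (h : ∀ x ∈ S, ∀ y ∈ T, c ≤ dist x y) : c ^ (#S * #T) ≤ ∏ x ∈ S, ∏ y ∈ T, dist x y := by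
  rw [← Finset.card_product, ← Finset.prod_const, ← Finset.prod_product']
  exact Finset.prod_le_prod (fun _ _ => hc) fun p hp =>
    h p.1 (Finset.mem_product.1 hp).1 p.2 (Finset.mem_product.1 hp).2

variable [DecidableEq X]

def pairDistProd (T : Finset X) : ℝ :=
  ∏ x ∈ T, ∏ y ∈ T.erase x, dist x y

lemma pairDistProd_nonneg (T : Finset X) : 0 ≤ pairDistProd T :=
  Finset.prod_nonneg fun _ _ => Finset.prod_nonneg fun _ _ => dist_nonneg

lemma pairDistProd_union {S T : Finset X} (hST : Disjoint S T) :
    pairDistProd (S ∪ T) =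
      pairDistProd S * pairDistProd T * (∏ x ∈ S, ∏ y ∈ T, dist x y) ^ 2 := by
  have hS : ∀ x ∈ S, ∏ y ∈ (S ∪ T).erase x, dist x y =
      (∏ y ∈ S.erase x, dist x y) * ∏ y ∈ T, dist x y := fun x hx => by
    rw [Finset.erase_union_distrib, Finset.erase_eq_of_notMem (Finset.disjoint_left.1 hST hx),
      Finset.prod_union (Finset.disjoint_of_subset_left (Finset.erase_subset _ _) hST)]
  have hT : ∀ x ∈ T, ∏ y ∈ (S ∪ T).erase x, dist x y =
      (∏ y ∈ T.erase x, dist x y) * ∏ y ∈ S, dist y x := fun x hx => by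
    rw [Finset.erase_union_distrib, Finset.erase_eq_of_notMem (Finset.disjoint_right.1 hST hx),
      Finset.prod_union (Finset.disjoint_of_subset_right (Finset.erase_subset _ _) hST),
      mul_comm]
    simp only [dist_comm x]
  rw [pairDistProd, Finset.prod_union hST, Finset.prod_congr rfl hS, Finset.prod_congr rfl hT,
    Finset.prod_mul_distrib, Finset.prod_mul_distrib, Finset.prod_comm (s := T)]
  simp only [pairDistProd]
  ring

lemma Finset.exists_fin_prod_prod_erase_dist_eq_pairDistProd (T : Finset X) :
    ∃ z : Fin #T → X, (∀ i, z i ∈ T) ∧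
      ∏ i, ∏ j ∈ Finset.univ.erase i, dist (z i) (z j) = pairDistProd T := by
  set z : Fin #T → X := fun i => T.equivFin.symm i
  have hz : Function.Injective z := Subtype.val_injective.comp T.equivFin.symm.injective
  have himage : Finset.univ.image z = T := by
    ext x
    simp only [Finset.mem_image, Finset.mem_univ, true_and]
    exact ⟨by rintro ⟨i, rfl⟩; exact (T.equivFin.symm i).2,
      fun hx => ⟨T.equivFin ⟨x, hx⟩, by simp [z]⟩⟩
  refine ⟨z, fun i => (T.equivFin.symm i).2, ?_⟩
  conv_rhs => rw [pairDistProd, ← himage]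
  rw [Finset.prod_image fun i _ j _ hij => hz hij]
  refine Finset.prod_congr rfl fun i _ => ?_
  rw [← Finset.image_erase hz, Finset.prod_image fun a _ b _ hab => hz hab]

end PairDistProd

section UniformlyPerfect

variable {X : Type*} [PseudoMetricSpace X]

def SeparatingModuliLE (E : Set X) (M : ℝ) : Prop :=
  ∀ (a : X) (r r' : ℝ), 0 < r → r < r' →
    (∀ w : X, r < dist w a → dist w a < r' → w ∉ E) →
    (∃ z ∈ E, dist z a ≤ r) → (∃ z ∈ E, r' ≤ dist z a) → Real.log (r' / r) ≤ M

/-- Uniform perfectness, with a point of `E` at distance `≥ ρ` in place of `ρ < diam E`. -/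
def IsUniformlyPerfectWith (E : Set X) (t : ℝ) : Prop :=
  ∀ z ∈ E, ∀ ρ > 0, (∃ z' ∈ E, ρ ≤ dist z' z) → ∃ w ∈ E, t * ρ ≤ dist w z ∧ dist w z < ρ

lemma SeparatingModuliLE.isUniformlyPerfectWith {E : Set X} {M t : ℝ}
    (hE : SeparatingModuliLE E M) (ht : 0 < t) (ht1 : t < 1) (htM : t < Real.exp (-M)) :
    IsUniformlyPerfectWith E t := by
  intro z hz ρ hρ hfar
  by_contra! hgap
  have hlog := hE z (t * ρ) ρ (by positivity) (by nlinarith)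
    (fun w hw hwρ hwE => (hgap w hwE hw.le).not_gt hwρ) ⟨z, hz, by rw [dist_self]; positivity⟩ hfar
  rw [div_mul_cancel_right₀ hρ.ne', Real.log_inv] at hlog
  linarith [(Real.log_lt_iff_lt_exp ht).2 htM]

variable [IsUltrametricDist X] [DecidableEq X]

theorem IsUniformlyPerfectWith.exists_finset_pow_le_pairDistProd {E : Set X} {t ε : ℝ}
    (hE : IsUniformlyPerfectWith E t) (hε : 0 < ε) (hεt : ε < t) (hε1 : ε ≤ 1) (k : ℕ)
    {z : X} (hz : z ∈ E) {ρ : ℝ} (hρ : 0 < ρ) (hfar : ∃ z' ∈ E, ρ ≤ dist z' z) :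
    ∃ T : Finset X, #T = 2 ^ k ∧ ↑T ⊆ E ∩ ball z ρ ∧
      (ε * (t * ρ)) ^ (#T * #T) ≤ (t * ρ) ^ #T * pairDistProd T := by
  have ht : 0 < t := hε.trans hεt
  induction k generalizing z ρ with
  | zero =>
    refine ⟨{z}, rfl, by simpa using ⟨hz, hρ⟩, ?_⟩
    simp only [pairDistProd, Finset.card_singleton, Finset.erase_singleton, Finset.prod_empty,
      Finset.prod_singleton, pow_one, mul_one]
    exact mul_le_of_le_one_left (by positivity) hε1
  | succ k ih =>
    obtain ⟨w, hw, htw, hwρ⟩ := hE z hz ρ hρ hfar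
    have hερ : ε * ρ < t * ρ := by gcongr
    obtain ⟨S, hSc, hSsub, hSprod⟩ := ih hz (ρ := ε * ρ) (by positivity) ⟨w, hw, hερ.le.trans htw⟩
    obtain ⟨T, hTc, hTsub, hTprod⟩ := ih hw (ρ := ε * ρ) (by positivity)
      ⟨z, hz, by rw [dist_comm]; exact hερ.le.trans htw⟩
    have hsep : ∀ x ∈ S, ∀ y ∈ T, t * ρ ≤ dist x y := fun x hx y hy =>
      le_dist_of_mem_ball_of_le_dist (ball_subset_ball hερ.le (hSsub hx).2)
        (ball_subset_ball hερ.le (hTsub hy).2) (by rwa [dist_comm])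
    have hST : Disjoint S T := Finset.disjoint_left.2 fun x hxS hxT =>
      (mul_pos ht hρ).not_ge (by simpa using hsep x hxS x hxT)
    have hcross := pow_card_mul_card_le_prod_prod_dist (by positivity) hsep
    set N := 2 ^ k
    rw [hSc] at hcross hSprod
    rw [hTc] at hcross hTprod
    refine ⟨S ∪ T, by rw [Finset.card_union_of_disjoint hST, hSc, hTc, pow_succ]; ring, ?_, ?_⟩
    · have hερ' : ε * ρ ≤ ρ := by nlinarith
      have hwz : ball w ρ = ball z ρ :=
        (IsUltrametricDist.ball_eq_of_mem (mem_ball.2 hwρ)).symm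
      rw [Finset.coe_union, Set.union_subset_iff]
      exact ⟨hSsub.trans (Set.inter_subset_inter_right E (ball_subset_ball hερ')),
        hTsub.trans (Set.inter_subset_inter_right E (hwz ▸ ball_subset_ball hερ'))⟩
    · rw [Finset.card_union_of_disjoint hST, hSc, hTc, pairDistProd_union hST]
      have := pairDistProd_nonneg S
      have := pairDistProd_nonneg T
      calc (ε * (t * ρ)) ^ ((N + N) * (N + N))
          = (ε * (t * (ε * ρ))) ^ (N * N) * (ε * (t * (ε * ρ))) ^ (N * N) *
              ((t * ρ) ^ (N * N)) ^ 2 := by ring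
        _ ≤ ((t * (ε * ρ)) ^ N * pairDistProd S) * ((t * (ε * ρ)) ^ N * pairDistProd T) *
              (∏ x ∈ S, ∏ y ∈ T, dist x y) ^ 2 := by gcongr
        _ = (ε * (t * ρ)) ^ (N + N) * (pairDistProd S * pairDistProd T *
              (∏ x ∈ S, ∏ y ∈ T, dist x y) ^ 2) := by ring
        _ ≤ (t * ρ) ^ (N + N) * (pairDistProd S * pairDistProd T *
              (∏ x ∈ S, ∏ y ∈ T, dist x y) ^ 2) := by
          have hshrink : ε * (t * ρ) ≤ t * ρ := mul_le_of_le_one_left (by positivity) hε1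
          gcongr

end UniformlyPerfect

lemma natCast_mul_pred (n : ℕ) : ((n * (n - 1) : ℕ) : ℝ) = n * ((n : ℝ) - 1) := by
  cases n <;> simp

lemma pow_mul_rpow_le_of_pow_le {a ε P : ℝ} {N : ℕ} (ha : 0 < a) (hε : 0 ≤ ε) (hN : 2 ≤ N)
    (h : (ε * a) ^ (N * N) ≤ a ^ N * P) :
    (ε * a * ε ^ ((1 : ℝ) / ((N : ℝ) - 1))) ^ (N * (N - 1)) ≤ P := by
  have hN1 : (1 : ℝ) < N := by exact_mod_cast hN
  have hroot : (ε ^ ((1 : ℝ) / ((N : ℝ) - 1))) ^ (N * (N - 1)) = ε ^ N := by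
    rw [← Real.rpow_natCast, ← Real.rpow_mul hε, ← Real.rpow_natCast, natCast_mul_pred,
      one_div_mul_eq_div, mul_div_cancel_right₀ _ (by linarith)]
  refine le_of_mul_le_mul_left ?_ (pow_pos ha N)
  calc a ^ N * (ε * a * ε ^ ((1 : ℝ) / ((N : ℝ) - 1))) ^ (N * (N - 1))
      = (ε * a) ^ (N * (N - 1) + N) := by rw [mul_pow, hroot, pow_add, mul_pow ε a N]; ring
    _ = (ε * a) ^ (N * N) := by rw [Nat.mul_sub_one, Nat.sub_add_cancel (Nat.le_mul_self N)]
    _ ≤ a ^ N * P := h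

section TransfiniteDiameter

variable {K : Type*} [NormedField K]

lemma prod_prod_erase_rpow_le_max {D : ℝ} (hD : 0 ≤ D) {n : ℕ} (z : Fin n → K)
    (hz : ∀ i j, ‖z i - z j‖ ≤ D) :
    (∏ i, ∏ j ∈ Finset.univ.erase i, ‖z i - z j‖) ^ ((1 : ℝ) / ((n : ℝ) * ((n : ℝ) - 1))) ≤
      max 1 D := by
  have hprod : ∏ i, ∏ j ∈ Finset.univ.erase i, ‖z i - z j‖ ≤ D ^ (n * (n - 1)) := by
    calc ∏ i, ∏ j ∈ Finset.univ.erase i, ‖z i - z j‖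
        ≤ ∏ i : Fin n, ∏ _j ∈ Finset.univ.erase i, D :=
          Finset.prod_le_prod (fun _ _ => Finset.prod_nonneg fun _ _ => norm_nonneg _)
            fun i _ => Finset.prod_le_prod (fun _ _ => norm_nonneg _) fun j _ => hz i j
      _ = D ^ (n * (n - 1)) := by simp [Finset.card_erase_of_mem, ← pow_mul, Nat.mul_comm]
  rw [one_div, ← natCast_mul_pred]
  rcases eq_or_ne (n * (n - 1)) 0 with hm | hm
  · simp [hm] -- `n ≤ 1`: the exponent is `1 / 0 = 0`
  calc (∏ i, ∏ j ∈ Finset.univ.erase i, ‖z i - z j‖) ^ ((n * (n - 1) : ℕ) : ℝ)⁻¹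
      ≤ (D ^ (n * (n - 1))) ^ ((n * (n - 1) : ℕ) : ℝ)⁻¹ := by gcongr
    _ = D := Real.pow_rpow_inv_natCast hD hm
    _ ≤ max 1 D := le_max_right 1 D

variable {E : Set K} {D : ℝ}

lemma dSeq_le_max (hD : 0 ≤ D) (hE : ∀ x ∈ E, ∀ y ∈ E, ‖x - y‖ ≤ D) (n : ℕ) :
    dSeq E n ≤ max 1 D :=
  Real.sSup_le (by
    rintro _ ⟨z, hz, rfl⟩
    exact prod_prod_erase_rpow_le_max hD z fun i j => hE _ (hz i) _ (hz j))
    (hD.trans (le_max_right 1 D))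

lemma le_dSeq_of_pow_le_pairDistProd [DecidableEq K] (hD : 0 ≤ D)
    (hE : ∀ x ∈ E, ∀ y ∈ E, ‖x - y‖ ≤ D) {T : Finset K} (hTE : ↑T ⊆ E) (hT : 2 ≤ #T)
    {c : ℝ} (hc : 0 ≤ c) (h : c ^ (#T * (#T - 1)) ≤ pairDistProd T) : c ≤ dSeq E #T := by
  obtain ⟨z, hzT, hzprod⟩ := T.exists_fin_prod_prod_erase_dist_eq_pairDistProd
  simp only [dist_eq_norm] at hzprod
  refine le_csSup_of_le ⟨max 1 D, ?_⟩ ⟨z, fun i => hTE (hzT i), rfl⟩ ?_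
  · rintro _ ⟨z, hz, rfl⟩
    exact prod_prod_erase_rpow_le_max hD z fun i j => hE _ (hz i) _ (hz j)
  have hm : (0 : ℝ) < ((#T * (#T - 1) : ℕ) : ℝ) := by
    have : 0 < #T - 1 := by omega
    positivity
  rw [hzprod, one_div, ← natCast_mul_pred, Real.le_rpow_inv_iff_of_pos hc
    (pairDistProd_nonneg T) hm, Real.rpow_natCast]
  exact h

lemma le_transDiam_of_tendsto {f : ℕ → ℝ} {L : ℝ} (hD : 0 ≤ D)
    (hE : ∀ x ∈ E, ∀ y ∈ E, ‖x - y‖ ≤ D) (hf : Tendsto f atTop (𝓝 L))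
    (hfE : ∃ᶠ n in atTop, f n ≤ dSeq E n) : L ≤ transDiam E :=
  hf.liminf_eq ▸ liminf_le_limsup_of_frequently_le hfE hf.isBoundedUnder_ge
    (isBoundedUnder_of ⟨max 1 D, dSeq_le_max hD hE⟩)

end TransfiniteDiameter

theorem IsUniformlyPerfectWith.mul_le_transDiam {K : Type*} [NormedField K] [IsUltrametricDist K]
    {E : Set K} {t ε : ℝ} (hE : IsUniformlyPerfectWith E t) (hε : 0 < ε) (hεt : ε < t)
    (hε1 : ε ≤ 1) {z0 : K} (hz0 : z0 ∈ E) {r : ℝ} (hr : 0 < r)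
    (hfar : ∃ z' ∈ E, r ≤ dist z' z0) :
    ε * (t * r) ≤ transDiam (E ∩ {w : K | ‖w - z0‖ ≤ r}) := by
  classical
  have ht : 0 < t := hε.trans hεt
  have hdiam : ∀ x ∈ E ∩ {w : K | ‖w - z0‖ ≤ r}, ∀ y ∈ E ∩ {w : K | ‖w - z0‖ ≤ r},
      ‖x - y‖ ≤ r := fun x hx y hy => by
    rw [← dist_eq_norm]
    exact (dist_triangle_max x z0 y).trans
      (max_le (by simpa [dist_eq_norm] using hx.2) (by simpa [dist_eq_norm'] using hy.2))
  have hlim : Tendsto (fun n : ℕ => ε * (t * r) * ε ^ ((1 : ℝ) / ((n : ℝ) - 1))) atTop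
      (𝓝 (ε * (t * r))) := by
    have h0 : Tendsto (fun n : ℕ => (1 : ℝ) / ((n : ℝ) - 1)) atTop (𝓝 0) :=
      tendsto_const_nhds.div_atTop
        (tendsto_atTop_add_const_right _ (-1) tendsto_natCast_atTop_atTop)
    simpa using (tendsto_const_nhds.rpow h0 (Or.inl hε.ne')).const_mul (ε * (t * r))
  refine le_transDiam_of_tendsto hr.le hdiam hlim (frequently_atTop.2 fun m => ?_)
  obtain ⟨T, hTcard, hTE, hTprod⟩ :=
    hE.exists_finset_pow_le_pairDistProd hε hεt hε1 (m + 1) hz0 hr hfar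
  have hT : 2 ≤ #T := hTcard ▸ Nat.le_self_pow (by omega) 2
  refine ⟨#T, ?_, le_dSeq_of_pow_le_pairDistProd hr.le hdiam ?_ hT (by positivity)
    (pow_mul_rpow_le_of_pow_le (by positivity) hε.le hT hTprod)⟩
  · exact hTcard ▸ (Nat.lt_two_pow_self).le.trans (Nat.pow_le_pow_right two_pos m.le_succ)
  · exact hTE.trans (Set.inter_subset_inter_right E fun w hw => by
      simpa [dist_eq_norm] using (mem_ball.1 hw).le)

theorem bounded_moduli_implies_lcd_general {K : Type*} [NontriviallyNormedField K]
    (hna : IsNonarchimedean (norm : K → ℝ))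
    (E : Set K) (M : ℝ) (hM : 0 ≤ M)
    (hmod : ∀ (a : K) (r r' : ℝ), 0 < r → r < r' →
      (∀ w : K, r < ‖w - a‖ → ‖w - a‖ < r' → w ∉ E) →
      (∃ z ∈ E, ‖z - a‖ ≤ r) → (∃ z ∈ E, r' ≤ ‖z - a‖) →
      Real.log (r' / r) ≤ M)
    (s : ℝ) (hs0 : 0 < s) (hsM : s < Real.exp (-M)) :
    ∀ z0 ∈ E, ∀ r : ℝ, 0 < r → r < Metric.diam E →
      s ^ 2 * r ≤ transDiam (E ∩ {w : K | ‖w - z0‖ ≤ r}) := by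
  intro z0 hz0 r hr hrE
  have := IsUltrametricDist.isUltrametricDist_of_isNonarchimedean_norm hna
  obtain ⟨t, hst, htM⟩ := exists_between hsM
  have ht : 0 < t := hs0.trans hst
  have ht1 : t < 1 := htM.trans_le (Real.exp_le_one_iff.2 (by linarith))
  have hE : IsUniformlyPerfectWith E t :=
    SeparatingModuliLE.isUniformlyPerfectWith
      (by simpa only [SeparatingModuliLE, dist_eq_norm] using hmod) ht ht1 htM
  have hεt : s ^ 2 / t < t := by rw [div_lt_iff₀ ht]; nlinarith
  have key := hE.mul_le_transDiam (by positivity) hεt (by linarith) hz0 hr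
    (exists_le_dist_of_lt_diam hr.le hrE z0)
  rwa [← mul_assoc, div_mul_cancel₀ _ ht.ne'] at key

/-- Non-archimedean Pommerenke theorem, forward direction: if every annulus
separating the compact set `E` has modulus at most `M`, then for every
`s ∈ (0, e^{-M})`, every `z0 ∈ E`, and every `r ∈ (0, diam E)`, one has
`d(E ∩ B(z0,r)) ≥ s² · r`; i.e. `E` has the lower capacity density property
with constant `c = s²`. -/
theorem bounded_moduli_implies_lcd {K : Type*} [NontriviallyNormedField K]
    [IsAlgClosed K] [CompleteSpace K] (hna : IsNonarchimedean (norm : K → ℝ))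
    (E : Set K) (hE : IsCompact E) (M : ℝ) (hM : 0 ≤ M)
    (hmod : ∀ (a : K) (r r' : ℝ), 0 < r → r < r' →
      (∀ w : K, r < ‖w - a‖ → ‖w - a‖ < r' → w ∉ E) →
      (∃ z ∈ E, ‖z - a‖ ≤ r) → (∃ z ∈ E, r' ≤ ‖z - a‖) →
      Real.log (r' / r) ≤ M)
    (s : ℝ) (hs0 : 0 < s) (hsM : s < Real.exp (-M)) :
    ∀ z0 ∈ E, ∀ r : ℝ, 0 < r → r < Metric.diam E →
      s ^ 2 * r ≤ transDiam (E ∩ {w : K | ‖w - z0‖ ≤ r}) :=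
  bounded_moduli_implies_lcd_general hna E M hM hmod s hs0 hsM
end

section
/- Let E ⊆ K be compact with the property that for some s ∈ (0,1) and every z ∈ E and t ∈ (0, diam E), the set E ∩ {w : s·t ≤ |w - z| ≤ t} is non-empty. Fix z0 ∈ E and r ∈ (0, diam E). Then for every j ≥ 0 there exist 2^j points of E ∩ B(z0, r), indexed by binary strings (i_1,…,i_j) ∈ {0,1}^j, such that any two points indexed by strings first differing at position m+1 (after agreeing on the first m coordinates) are at distance > s^{m+1}·r from each other. -/
/-!
Split every closed ball `B(z, ρ)` centred in `E` into two sub-balls `B(z, sρ)` and `B(w, sρ)`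
with `w ∈ E` and `sρ < |w - z| ≤ ρ`, and recurse. By the ultrametric inequality both sub-balls
lie in `B(z, ρ)`, and every point of one is at distance `> sρ` from every point of the other.
The strict inequality `sρ < |w - z|` comes from compactness: the hypothesis gives points with
`|w - z| ∈ [st, t]` for all `t` slightly above `ρ`, and the closed set `{|w - z| : w ∈ E}`
then contains a point of `(sρ, ρ]`.
-/

open Metric Set

lemma IsClosed.inter_Ioc_nonempty_of_forall_Ioo {D : Set ℝ} (hD : IsClosed D) {a b c : ℝ}
    (hab : a < b) (hbc : b < c) (h : ∀ t ∈ Ioo b c, (D ∩ Ioc a t).Nonempty) :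
    (D ∩ Ioc a b).Nonempty := by
  by_contra hempty
  have hb : b ∈ D := hD.closure_subset <| Metric.mem_closure_iff.2 fun ε hε => by
    set t := min (b + ε / 2) ((b + c) / 2)
    have ht : t ∈ Ioo b c := ⟨lt_min (by linarith) (by linarith), by
      linarith [min_le_right (b + ε / 2) ((b + c) / 2)]⟩
    obtain ⟨d, hd, had, hdt⟩ := h t ht
    have hbd : b < d := lt_of_not_ge fun hdb => hempty ⟨d, hd, had, hdb⟩
    refine ⟨d, hd, ?_⟩
    rw [Real.dist_eq, abs_sub_lt_iff]
    constructor <;> linarith [min_le_left (b + ε / 2) ((b + c) / 2)]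
  exact hempty ⟨b, hb, hab, le_rfl⟩

lemma IsCompact.exists_dist_mem_Ioc {X : Type*} [PseudoMetricSpace X] {E : Set X}
    (hE : IsCompact E) (z : X) {a ρ R : ℝ} (haρ : a < ρ) (hρR : ρ < R)
    (h : ∀ t ∈ Ioo ρ R, ∃ w ∈ E, a < dist w z ∧ dist w z ≤ t) :
    ∃ w ∈ E, a < dist w z ∧ dist w z ≤ ρ := by
  have hD : IsClosed ((dist · z) '' E) :=
    (hE.image (continuous_id.dist continuous_const)).isClosed
  obtain ⟨_, ⟨w, hwE, rfl⟩, hw⟩ := hD.inter_Ioc_nonempty_of_forall_Ioo haρ hρR fun t ht => by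
    obtain ⟨w, hwE, hw⟩ := h t ht
    exact ⟨dist w z, mem_image_of_mem _ hwE, hw⟩
  exact ⟨w, hwE, hw⟩

lemma IsUltrametricDist.lt_dist_of_lt_dist {X : Type*} [PseudoMetricSpace X]
    [IsUltrametricDist X] {x y z w : X} {c : ℝ} (hx : dist x z ≤ c) (hy : dist y w ≤ c)
    (hzw : c < dist z w) : c < dist x y := by
  by_contra! hxy
  refine hzw.not_ge <| (dist_triangle_max z x w).trans <| max_le ?_ <|
    (dist_triangle_max x y w).trans (max_le hxy hy)
  rwa [dist_comm]

section SeparatedTree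

variable {X : Type*} [PseudoMetricSpace X]

def IsSeparatedTree (s r : ℝ) {j : ℕ} (a : (Fin j → Bool) → X) : Prop :=
  ∀ σ τ : Fin j → Bool, ∀ m : Fin j, (∀ k : Fin j, (k : ℕ) < m → σ k = τ k) → σ m ≠ τ m →
    s ^ ((m : ℕ) + 1) * r < dist (a σ) (a τ)

def treeNode {j : ℕ} (a₀ a₁ : (Fin j → Bool) → X) : (Fin (j + 1) → Bool) → X :=
  fun σ => cond (σ 0) (a₁ (Fin.tail σ)) (a₀ (Fin.tail σ))

lemma isSeparatedTree_treeNode {s r : ℝ} {j : ℕ} {a₀ a₁ : (Fin j → Bool) → X}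
    (h₀ : IsSeparatedTree s (s * r) a₀) (h₁ : IsSeparatedTree s (s * r) a₁)
    (h₀₁ : ∀ σ τ, s * r < dist (a₀ σ) (a₁ τ)) : IsSeparatedTree s r (treeNode a₀ a₁) := by
  intro σ τ m hagree hne
  induction m using Fin.cases with
  | zero =>
    rw [Fin.val_zero, zero_add, pow_one]
    cases hσ : σ 0 <;> cases hτ : τ 0 <;> simp only [treeNode, hσ, hτ, cond_true, cond_false]
    case false.false | true.true => exact absurd (hσ.trans hτ.symm) hne
    case false.true => exact h₀₁ _ _
    case true.false => exact dist_comm (a₀ _) (a₁ _) ▸ h₀₁ _ _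
  | succ k =>
    have h0 : σ 0 = τ 0 := hagree 0 (Nat.succ_pos k)
    have htail : ∀ i : Fin j, (i : ℕ) < k → Fin.tail σ i = Fin.tail τ i := fun i hi =>
      hagree i.succ (Nat.succ_lt_succ hi)
    rw [Fin.val_succ, pow_succ, mul_assoc]
    cases hσ : σ 0 <;> rw [hσ] at h0 <;> simp only [treeNode, hσ, ← h0, cond_true, cond_false]
    · exact h₀ _ _ k htail hne
    · exact h₁ _ _ k htail hne

variable [IsUltrametricDist X]

theorem exists_isSeparatedTree {E : Set X} {s R : ℝ} (hs0 : 0 < s) (hs1 : s < 1)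
    (hsplit : ∀ z ∈ E, ∀ ρ, 0 < ρ → ρ < R → ∃ w ∈ E, s * ρ < dist w z ∧ dist w z ≤ ρ)
    (j : ℕ) : ∀ z ∈ E, ∀ ρ, 0 < ρ → ρ < R →
      ∃ a : (Fin j → Bool) → X, (∀ σ, a σ ∈ E ∩ closedBall z ρ) ∧ IsSeparatedTree s ρ a := by
  induction j with
  | zero =>
    intro z hz ρ hρ _
    exact ⟨fun _ => z, fun _ => ⟨hz, mem_closedBall_self hρ.le⟩, fun _ _ m => m.elim0⟩
  | succ j ih =>
    intro z hz ρ hρ hρR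
    have hsρ : s * ρ < ρ := mul_lt_of_lt_one_left hρ hs1
    obtain ⟨w, hwE, hzw, hwρ⟩ := hsplit z hz ρ hρ hρR
    obtain ⟨a₀, ha₀, hsep₀⟩ := ih z hz (s * ρ) (mul_pos hs0 hρ) (hsρ.trans hρR)
    obtain ⟨a₁, ha₁, hsep₁⟩ := ih w hwE (s * ρ) (mul_pos hs0 hρ) (hsρ.trans hρR)
    have hball₀ : closedBall z (s * ρ) ⊆ closedBall z ρ := closedBall_subset_closedBall hsρ.le
    have hball₁ : closedBall w (s * ρ) ⊆ closedBall z ρ := by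
      rw [IsUltrametricDist.closedBall_eq_of_mem (mem_closedBall.2 hwρ)]
      exact closedBall_subset_closedBall hsρ.le
    refine ⟨treeNode a₀ a₁, fun σ => ?_, isSeparatedTree_treeNode hsep₀ hsep₁ fun σ τ => ?_⟩
    · unfold treeNode
      cases σ 0
      · exact ⟨(ha₀ _).1, hball₀ (ha₀ _).2⟩
      · exact ⟨(ha₁ _).1, hball₁ (ha₁ _).2⟩
    · rw [dist_comm] at hzw
      exact IsUltrametricDist.lt_dist_of_lt_dist (ha₀ σ).2 (ha₁ τ).2 hzw

end SeparatedTree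

/-- Pommerenke's binary tree of well-separated points: if a compact set `E` in
a non-archimedean field satisfies, for some `s ∈ (0,1)`, that
`E ∩ {w : s·t ≤ |w - z| ≤ t}` is non-empty for every `z ∈ E` and every
`t ∈ (0, diam E)`, then for every `z0 ∈ E`, `r ∈ (0, diam E)`, and `j ≥ 0`
there exist `2^j` points of `E ∩ B(z0,r)`, indexed by binary strings of length
`j`, such that two points whose indexing strings agree on the first `m`
coordinates and differ at the `(m+1)`-st are at distance `> s^(m+1)·r`. -/
theorem pommerenke_binary_tree {K : Type*} [NontriviallyNormedField K]
    (hna : IsNonarchimedean (norm : K → ℝ)) (E : Set K) (hE : IsCompact E)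
    (s : ℝ) (hs0 : 0 < s) (hs1 : s < 1)
    (hstep : ∀ z ∈ E, ∀ t : ℝ, 0 < t → t < Metric.diam E →
      ∃ w ∈ E, s * t ≤ ‖w - z‖ ∧ ‖w - z‖ ≤ t)
    (z0 : K) (hz0 : z0 ∈ E) (r : ℝ) (hr0 : 0 < r) (hr1 : r < Metric.diam E) :
    ∀ j : ℕ, ∃ a : (Fin j → Bool) → K,
      (∀ σ, a σ ∈ E ∧ ‖a σ - z0‖ ≤ r) ∧
      ∀ σ τ : Fin j → Bool, ∀ m : Fin j,
        (∀ k : Fin j, (k : ℕ) < (m : ℕ) → σ k = τ k) → σ m ≠ τ m →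
        s ^ ((m : ℕ) + 1) * r < ‖a σ - a τ‖ := by
  intro j
  have := IsUltrametricDist.isUltrametricDist_of_isNonarchimedean_norm hna
  have hsplit : ∀ z ∈ E, ∀ ρ, 0 < ρ → ρ < diam E →
      ∃ w ∈ E, s * ρ < dist w z ∧ dist w z ≤ ρ := by
    intro z hz ρ hρ hρE
    refine hE.exists_dist_mem_Ioc z (mul_lt_of_lt_one_left hρ hs1) hρE fun t ht => ?_
    obtain ⟨w, hwE, hst, hwt⟩ := hstep z hz t (hρ.trans ht.1) ht.2
    rw [← dist_eq_norm] at hst hwt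
    exact ⟨w, hwE, (mul_lt_mul_of_pos_left ht.1 hs0).trans_le hst, hwt⟩
  obtain ⟨a, ha, hsep⟩ := exists_isSeparatedTree hs0 hs1 hsplit j z0 hz0 r hr0 hr1
  refine ⟨a, fun σ => ⟨(ha σ).1, ?_⟩, fun σ τ m hagree hne => ?_⟩
  · rw [← dist_eq_norm]
    exact (ha σ).2
  · rw [← dist_eq_norm]
    exact hsep σ τ m hagree hne
end

section
/- Let s ∈ (0,1), r > 0, and suppose for each j ∈ ℕ and each binary string of length j we have points a_{i_1,…,i_j} in a metric space with ultrametric distance d, satisfying: whenever two strings of length j agree on exactly the first m coordinates (0 ≤ m ≤ j-1) the corresponding points satisfy d > s^{m+1} r. Then for each string (i_1,…,i_j), the product over all other strings (i'_1,…,i'_j) of the pairwise distances d(a_{i_1,…,i_j}, a_{i'_1,…,i'_j}) exceeds ∏_{m=0}^{j-1} (s^{m+1} r)^{2^{j-m-1}}, and consequently the transfinite diameter of the set {a_{i_1,…,i_j}} of 2^j points is at least (s^{∑_{m=0}^{∞} (m+1) 2^{-(m+1)}}) r = s^2 r as j → ∞. -/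
/-!
Order the strings `τ ≠ σ` by the length `m` of their common prefix with `σ`: exactly
`2^(j-m-1)` of them share exactly `m` letters, and each contributes a distance `> s^(m+1) r`.
After taking the `(2^j - 1)`-th root, the factor `s` appears with exponent
`∑_{m<j} (m+1) 2^(j-m-1) / (2^j - 1) = 2^j/(2^j - 1) · ∑_{m<j} (m+1)/2^(m+1)`, which tends
to `∑_m (m+1)/2^(m+1) = 2`.
-/

open Filter Finset Topology

theorem Antitone.prod_sdiff_eq_prod_range {β M : Type*} [CommMonoid M] [DecidableEq β]
    {A : ℕ → Finset β} (hA : Antitone A) (f : β → M) (n : ℕ) :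
    ∏ x ∈ A 0 \ A n, f x = ∏ m ∈ range n, ∏ x ∈ A m \ A (m + 1), f x := by
  induction n with
  | zero => simp
  | succ n ih =>
    rw [prod_range_succ, ← ih, ← prod_union (sdiff_disjoint.mono_right sdiff_subset),
      sdiff_union_sdiff_cancel (hA n.zero_le) (hA n.le_succ)]

section PrefixCylinder

variable {α : Type*} [Fintype α] [DecidableEq α] {j : ℕ}

def prefixCylinder (σ : Fin j → α) (m : ℕ) : Finset (Fin j → α) :=
  {τ | ∀ k : Fin j, (k : ℕ) < m → σ k = τ k}

theorem mem_prefixCylinder {σ τ : Fin j → α} {m : ℕ} :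
    τ ∈ prefixCylinder σ m ↔ ∀ k : Fin j, (k : ℕ) < m → σ k = τ k := by
  simp [prefixCylinder]

theorem prefixCylinder_zero (σ : Fin j → α) : prefixCylinder σ 0 = univ := by
  ext τ
  simp [mem_prefixCylinder]

theorem prefixCylinder_self (σ : Fin j → α) : prefixCylinder σ j = {σ} := by
  ext τ
  simp only [mem_prefixCylinder, Fin.is_lt, forall_const, mem_singleton, funext_iff, eq_comm]

theorem prefixCylinder_antitone (σ : Fin j → α) : Antitone (prefixCylinder σ) :=
  fun _ _ hmn _ hτ => mem_prefixCylinder.2 fun k hk =>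
    mem_prefixCylinder.1 hτ k (hk.trans_le hmn)

theorem card_prefixCylinder (σ : Fin j → α) (m : ℕ) :
    #(prefixCylinder σ m) = Fintype.card α ^ (j - m) := by
  have hpi : prefixCylinder σ m =
      Fintype.piFinset fun k : Fin j => if (k : ℕ) < m then {σ k} else univ := by
    ext τ
    simp only [mem_prefixCylinder, Fintype.mem_piFinset]
    refine forall_congr' fun k => ?_
    split_ifs <;> simp_all [eq_comm]
  have hfree : #({k : Fin j | ¬(k : ℕ) < m} : Finset (Fin j)) = j - m := by
    rw [filter_not, card_sdiff_of_subset (filter_subset _ _), Fin.card_filter_val_lt,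
      card_univ, Fintype.card_fin]
    omega
  rw [hpi, Fintype.card_piFinset]
  simp only [apply_ite card, card_singleton, card_univ]
  rw [prod_ite, prod_const_one, prod_const, one_mul, hfree]

theorem card_prefixCylinder_sdiff_succ (σ : Fin j → α) {m : ℕ} (hm : m < j) :
    #(prefixCylinder σ m \ prefixCylinder σ (m + 1)) =
      (Fintype.card α - 1) * Fintype.card α ^ (j - m - 1) := by
  obtain ⟨k, hk⟩ : ∃ k, j - m = k + 1 := ⟨j - m - 1, by omega⟩
  rw [card_sdiff_of_subset (prefixCylinder_antitone σ (m.le_add_right 1)), card_prefixCylinder,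
    card_prefixCylinder, Nat.sub_add_eq, hk, Nat.add_sub_cancel, pow_succ', Nat.sub_one_mul]

theorem agree_and_ne_of_mem_prefixCylinder_sdiff_succ {σ τ : Fin j → α} {m : Fin j}
    (hτ : τ ∈ prefixCylinder σ m \ prefixCylinder σ (m + 1)) :
    (∀ k : Fin j, (k : ℕ) < m → σ k = τ k) ∧ σ m ≠ τ m := by
  rw [Finset.mem_sdiff, mem_prefixCylinder, mem_prefixCylinder] at hτ
  obtain ⟨hagree, hnot⟩ := hτ
  refine ⟨hagree, fun hm => hnot fun k hk => ?_⟩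
  rcases (Nat.lt_succ_iff.1 hk).lt_or_eq with hlt | heq
  · exact hagree k hlt
  · exact Fin.ext heq ▸ hm

theorem prod_pow_lt_prod_erase [Nontrivial α] (σ : Fin j → α) (hj : 1 ≤ j) {c : ℕ → ℝ}
    {f : (Fin j → α) → ℝ} (hc : ∀ m, 0 < c m)
    (hf : ∀ τ, ∀ m : Fin j, (∀ k : Fin j, (k : ℕ) < m → σ k = τ k) → σ m ≠ τ m → c m < f τ) :
    ∏ m ∈ range j, c m ^ ((Fintype.card α - 1) * Fintype.card α ^ (j - m - 1)) <
      ∏ τ ∈ univ.erase σ, f τ := by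
  have hcard := Fintype.one_lt_card (α := α)
  calc ∏ m ∈ range j, c m ^ ((Fintype.card α - 1) * Fintype.card α ^ (j - m - 1))
      = ∏ m ∈ range j, ∏ _τ ∈ prefixCylinder σ m \ prefixCylinder σ (m + 1), c m :=
        prod_congr rfl fun m hm => by
          rw [prod_const, card_prefixCylinder_sdiff_succ σ (mem_range.1 hm)]
    _ < ∏ m ∈ range j, ∏ τ ∈ prefixCylinder σ m \ prefixCylinder σ (m + 1), f τ := by
        refine prod_lt_prod_of_nonempty (fun m _ => prod_pos fun _ _ => hc m)
          (fun m hm => ?_) (nonempty_range_iff.2 (by omega))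
        have hm' := mem_range.1 hm
        refine prod_lt_prod_of_nonempty (fun _ _ => hc m) (fun τ hτ => ?_) ?_
        · exact (agree_and_ne_of_mem_prefixCylinder_sdiff_succ (m := ⟨m, hm'⟩) hτ).elim
            (hf τ ⟨m, hm'⟩)
        · rw [← card_pos, card_prefixCylinder_sdiff_succ σ hm']
          exact Nat.mul_pos (by omega) (by positivity)
    _ = ∏ τ ∈ univ.erase σ, f τ := by
        rw [← (prefixCylinder_antitone σ).prod_sdiff_eq_prod_range, prefixCylinder_zero,
          prefixCylinder_self, sdiff_singleton_eq_erase]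

end PrefixCylinder

theorem prod_range_pow_succ_mul_pow {M : Type*} [CommMonoid M] (x y : M) (e : ℕ → ℕ) (n : ℕ) :
    ∏ m ∈ range n, (x ^ (m + 1) * y) ^ e m =
      x ^ (∑ m ∈ range n, (m + 1) * e m) * y ^ (∑ m ∈ range n, e m) := by
  rw [← prod_pow_eq_pow_sum, ← prod_pow_eq_pow_sum, ← prod_mul_distrib]
  exact prod_congr rfl fun m _ => by rw [mul_pow, pow_mul]

theorem sum_range_two_pow_sub_one (n : ℕ) :
    ∑ m ∈ range n, 2 ^ (n - m - 1) = 2 ^ n - 1 := by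
  have h := geom_sum_mul_add 1 n
  rw [← sum_range_reflect] at h
  simp only [Nat.sub_right_comm n 1, mul_one, Nat.reduceAdd] at h
  omega

theorem cast_sum_range_succ_mul_two_pow (n : ℕ) :
    ((∑ m ∈ range n, (m + 1) * 2 ^ (n - m - 1) : ℕ) : ℝ) =
      2 ^ n * ∑ m ∈ range n, ((m : ℝ) + 1) / 2 ^ (m + 1) := by
  push_cast
  rw [mul_sum]
  refine sum_congr rfl fun m hm => ?_
  have hsplit : (2 : ℝ) ^ n = 2 ^ (n - m - 1) * 2 ^ (m + 1) := by
    rw [← pow_add]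
    congr 1
    have := mem_range.1 hm
    omega
  rw [hsplit]
  field_simp

theorem hasSum_succ_div_two_pow : HasSum (fun m : ℕ => ((m : ℝ) + 1) / 2 ^ (m + 1)) 2 := by
  have h := (hasSum_nat_add_iff' 1).mpr
    (hasSum_coe_mul_geometric_of_norm_lt_one (r := (1 / 2 : ℝ)) (by norm_num))
  norm_num at h
  simpa only [div_eq_mul_one_div (_ + 1 : ℝ), one_div_pow] using h

theorem tendsto_two_pow_div_two_pow_sub_one :
    Tendsto (fun n : ℕ => (2 : ℝ) ^ n / (2 ^ n - 1)) atTop (𝓝 1) := by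
  have h := ((tendsto_inv_atTop_zero.comp
    (tendsto_pow_atTop_atTop_of_one_lt one_lt_two)).const_sub (1 : ℝ)).inv₀ (by norm_num)
  refine (h.congr fun n => ?_).trans (by norm_num)
  rw [Function.comp_apply, ← inv_div, sub_div, div_self (by positivity), one_div]

theorem tendsto_sum_range_succ_mul_two_pow_div :
    Tendsto (fun n : ℕ => ((∑ m ∈ range n, (m + 1) * 2 ^ (n - m - 1) : ℕ) : ℝ) / (2 ^ n - 1))
      atTop (𝓝 2) := by
  have h := tendsto_two_pow_div_two_pow_sub_one.mul hasSum_succ_div_two_pow.tendsto_sum_nat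
  rw [one_mul] at h
  refine h.congr fun n => ?_
  rw [cast_sum_range_succ_mul_two_pow, mul_div_right_comm]

theorem tendsto_prod_range_rpow {s r : ℝ} (hs : 0 ≤ s) (hr : 0 ≤ r) :
    Tendsto (fun n : ℕ =>
        (∏ m ∈ range n, (s ^ (m + 1) * r) ^ (2 ^ (n - m - 1))) ^ ((1 : ℝ) / (2 ^ n - 1)))
      atTop (𝓝 (s ^ 2 * r)) := by
  have h := (tendsto_const_nhds (x := s)).rpow tendsto_sum_range_succ_mul_two_pow_div
    (Or.inr two_pos) |>.mul_const r
  rw [Real.rpow_two] at h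
  refine h.congr' ((eventually_ge_atTop 1).mono fun n hn => ?_)
  have hN : ((∑ m ∈ range n, 2 ^ (n - m - 1) : ℕ) : ℝ) = 2 ^ n - 1 := by
    rw [sum_range_two_pow_sub_one, Nat.cast_sub Nat.one_le_two_pow]
    push_cast
    rfl
  have hN0 : (2 : ℝ) ^ n - 1 ≠ 0 := by
    rw [sub_ne_zero]
    exact (one_lt_pow₀ one_lt_two (by omega)).ne'
  dsimp only
  rw [prod_range_pow_succ_mul_pow, Real.mul_rpow (by positivity) (by positivity),
    ← Real.rpow_natCast s, ← Real.rpow_natCast r, ← Real.rpow_mul hs, ← Real.rpow_mul hr, hN,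
    mul_one_div, mul_one_div, div_self hN0, Real.rpow_one]

theorem pommerenke_counting_lemma_general {X : Type*} [MetricSpace X]
    (s r : ℝ) (hs0 : 0 < s) (hr : 0 < r)
    (j : ℕ) (hj : 1 ≤ j) (a : (Fin j → Bool) → X)
    (hsep : ∀ σ τ : Fin j → Bool, ∀ m : Fin j,
      (∀ k : Fin j, (k : ℕ) < (m : ℕ) → σ k = τ k) → σ m ≠ τ m →
      s ^ ((m : ℕ) + 1) * r < dist (a σ) (a τ)) :
    (∀ σ : Fin j → Bool,
      ∏ m ∈ Finset.range j, (s ^ (m + 1) * r) ^ (2 ^ (j - m - 1)) <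
        ∏ τ ∈ Finset.univ.erase σ, dist (a σ) (a τ)) ∧
    Tendsto (fun n : ℕ =>
        (∏ m ∈ Finset.range n, (s ^ (m + 1) * r) ^ (2 ^ (n - m - 1))) ^
          ((1 : ℝ) / ((2 : ℝ) ^ n - 1)))
      atTop (nhds (s ^ 2 * r)) := by
  refine ⟨fun σ => ?_, tendsto_prod_range_rpow hs0.le hr.le⟩
  simpa only [Fintype.card_bool, Nat.add_one_sub_one, one_mul] using
    prod_pow_lt_prod_erase σ hj (fun m => by positivity) (hsep σ)

/-- Abstract counting lemma behind Pommerenke's argument: in an ultrametric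
space, given `2^j` points indexed by binary strings of length `j ≥ 1` such
that points whose strings agree on exactly the first `m` coordinates are at
distance `> s^(m+1)·r`, the product over all other strings of the pairwise
distances from any fixed point exceeds `∏_{m<j} (s^(m+1) r)^(2^(j-m-1))`; and
the resulting lower bound for the transfinite diameter of the configuration,
`(∏_{m<j} (s^(m+1) r)^(2^(j-m-1)))^(1/(2^j - 1))`, tends to
`s^(∑_{m} (m+1)/2^(m+1)) · r = s² r` as `j → ∞`. -/
theorem pommerenke_counting_lemma {X : Type*} [MetricSpace X]
    (hultra : ∀ x y z : X, dist x z ≤ max (dist x y) (dist y z))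
    (s r : ℝ) (hs0 : 0 < s) (hs1 : s < 1) (hr : 0 < r)
    (j : ℕ) (hj : 1 ≤ j) (a : (Fin j → Bool) → X)
    (hsep : ∀ σ τ : Fin j → Bool, ∀ m : Fin j,
      (∀ k : Fin j, (k : ℕ) < (m : ℕ) → σ k = τ k) → σ m ≠ τ m →
      s ^ ((m : ℕ) + 1) * r < dist (a σ) (a τ)) :
    (∀ σ : Fin j → Bool,
      ∏ m ∈ Finset.range j, (s ^ (m + 1) * r) ^ (2 ^ (j - m - 1)) <
        ∏ τ ∈ Finset.univ.erase σ, dist (a σ) (a τ)) ∧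
    Tendsto (fun n : ℕ =>
        (∏ m ∈ Finset.range n, (s ^ (m + 1) * r) ^ (2 ^ (n - m - 1))) ^
          ((1 : ℝ) / ((2 : ℝ) ^ n - 1)))
      atTop (nhds (s ^ 2 * r)) :=
  pommerenke_counting_lemma_general s r hs0 hr j hj a hsep
end
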